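/- arXiv:1203.3322 — 5 statements merged into one kernel-verified Lean document; each statement's English description precedes it below -/
import Mathlib

section
/- Let Ĥ be a real-valued function defined on all finite sequences (a₁,…,aₙ) of nonnegative real numbers with a₁+…+aₙ > 0. Assume: (1) Ĥ is homogeneous, i.e. Ĥ(c·a₁,…,c·aₙ) = c·Ĥ(a₁,…,aₙ) for all c > 0; (2) Ĥ is symmetric, i.e. invariant under permutations of its arguments; (3) Ĥ satisfies the 2-cocycle equation: for any finite sequences (a₁,…,a_k), (b₁,…,b_l), …, (c₁,…,c_m) of nonnegative reals each with positive sum, Ĥ(a₁,…,a_k, b₁,…,b_l, …, c₁,…,c_m) = Ĥ(a₁+…+a_k, b₁+…+b_l, …, c₁+…+c_m) + Ĥ(a₁,…,a_k) + Ĥ(b₁,…,b_l) + … + Ĥ(c₁,…,c_m); (4) Ĥ is continuous (as a function of its arguments, for each fixed number of arguments); (5) Ĥ(1,1) = 2. Then Ĥ(a₁,…,aₙ) = u(a₁) + … + u(aₙ) − u(a₁+…+aₙ), where u(x) = x·log₂(1/x) for x > 0 and u(0) = 0. -/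
open Filter Topology Asymptotics

/-!
The reference solution `bitEntropy` satisfies all the axioms, so it suffices to show that a
continuous homogeneous 2-cocycle `D` with `D [1, 1] = 0` vanishes. Let `g n = D [1, …, 1]`
(`n` ones). Cutting `a * b` ones into `b` blocks of `a` and rescaling gives
`g (a * b) = a * g b + b * g a`, so `g n / n` is completely additive. Splitting off the last one
gives `g (n + 1) - g n = D [n, 1] = (n + 1) * D [n / (n + 1), 1 / (n + 1)]`, which is `o(n)`
because `D` is continuous at `[1, 0]` and vanishes there. Hence the increments of `g n / n` tend
to `0`, and by Erdős' theorem on additive functions `g n / n` is a multiple of `log n`; it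
vanishes because `g 2 = 0`. Grouping ones then shows that `D` vanishes on lists of positive
integers, homogeneity extends this to positive rationals, and continuity to all admissible lists.
-/

lemma List.sum_map_sub {α M : Type*} [AddCommGroup M] (l : List α) (f g : α → M) :
    (l.map fun a => f a - g a).sum = (l.map f).sum - (l.map g).sum := by
  simpa using Multiset.sum_map_sub (m := (l : Multiset α)) (f := f) (g := g)

lemma tendsto_div_sq_of_tendsto_sub_div {g : ℕ → ℝ}
    (h : Tendsto (fun n : ℕ => (g (n + 1) - g n) / (n + 1)) atTop (𝓝 0)) :
    Tendsto (fun n : ℕ => g n / (n : ℝ) ^ 2) atTop (𝓝 0) := by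
  have hdiff : (fun k : ℕ => g (k + 1) - g k) =o[atTop] fun k : ℕ => (k : ℝ) + 1 :=
    (isLittleO_iff_tendsto fun k hk => absurd hk (by positivity)).2 h
  have hsum : (fun n : ℕ => g n - g 0) =o[atTop]
      fun n : ℕ => ∑ k ∈ Finset.range n, ((k : ℝ) + 1) := by
    refine (hdiff.sum_range (fun k => by positivity) ?_).congr_left
      fun n => Finset.sum_range_sub g n
    refine tendsto_atTop_mono (fun n => ?_) tendsto_natCast_atTop_atTop
    simpa using Finset.sum_le_sum fun k (_ : k ∈ Finset.range n) =>
      (le_add_of_nonneg_left k.cast_nonneg : (1 : ℝ) ≤ k + 1)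
  have hsq : (fun n : ℕ => ∑ k ∈ Finset.range n, ((k : ℝ) + 1)) =O[atTop]
      fun n : ℕ => (n : ℝ) ^ 2 := by
    refine IsBigO.of_bound 1 (Eventually.of_forall fun n => ?_)
    have hle : ∑ k ∈ Finset.range n, ((k : ℝ) + 1) ≤ ∑ _k ∈ Finset.range n, (n : ℝ) :=
      Finset.sum_le_sum fun k hk => by exact_mod_cast Finset.mem_range.1 hk
    rw [Finset.sum_const, Finset.card_range, nsmul_eq_mul] at hle
    rw [Real.norm_of_nonneg (by positivity), Real.norm_of_nonneg (by positivity)]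
    nlinarith
  have hconst : (fun _ : ℕ => g 0) =o[atTop] fun n : ℕ => (n : ℝ) ^ 2 :=
    isLittleO_const_left.2 (Or.inr (tendsto_norm_atTop_atTop.comp
      (tendsto_pow_atTop two_ne_zero |>.comp tendsto_natCast_atTop_atTop)))
  simpa using ((hsum.trans_isBigO hsq).add hconst).tendsto_div_nhds_zero

lemma tendsto_sub_div_of_tendsto_sub_div {g : ℕ → ℝ}
    (h : Tendsto (fun n : ℕ => (g (n + 1) - g n) / (n + 1)) atTop (𝓝 0)) :
    Tendsto (fun n : ℕ => g (n + 1) / (n + 1) - g n / n) atTop (𝓝 0) := by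
  have hlim :=
    h.sub ((tendsto_div_sq_of_tendsto_sub_div h).mul (tendsto_natCast_div_add_atTop 1))
  rw [zero_mul, sub_zero] at hlim
  refine hlim.congr' (eventually_ge_atTop 1 |>.mono fun n hn => ?_)
  have : (0 : ℝ) < n := by exact_mod_cast hn
  field_simp
  ring

lemma tendsto_natFloor_mul_add_one_div {x : ℝ} (hx : 0 ≤ x) :
    Tendsto (fun j : ℕ => ((⌊x * j⌋₊ + 1 : ℕ) : ℝ) / j) atTop (𝓝 x) := by
  have := ((tendsto_nat_floor_mul_div_atTop hx).comp tendsto_natCast_atTop_atTop).add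
    (tendsto_const_div_atTop_nhds_zero_nat (1 : ℝ))
  simpa [add_div] using this

lemma map_pow_of_map_mul {f : ℕ → ℝ}
    (hmul : ∀ a b, 0 < a → 0 < b → f (a * b) = f a + f b) {m : ℕ} (hm : 0 < m) (k : ℕ) :
    f (m ^ k) = k * f m := by
  induction k with
  | zero => simpa using hmul 1 1 one_pos one_pos
  | succ k ih =>
    rw [pow_succ, hmul _ _ (pow_pos hm k) hm, ih]
    push_cast
    ring

lemma exists_abs_le_add_mul_logb {f : ℕ → ℝ}
    (hmul : ∀ a b, 0 < a → 0 < b → f (a * b) = f a + f b) (h2 : f 2 = 0)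
    (hd : Tendsto (fun n => f (n + 1) - f n) atTop (𝓝 0)) {ε : ℝ} (hε : 0 < ε) :
    ∃ C, ∀ n, 0 < n → |f n| ≤ C + ε * Real.logb 2 n := by
  obtain ⟨N, hN⟩ := eventually_atTop.1 ((Metric.tendsto_nhds.1 hd) ε hε)
  refine ⟨∑ j ∈ Finset.range (2 * N + 2), |f j|, fun n => ?_⟩
  induction n using Nat.strong_induction_on with
  | _ n ih =>
    intro hn
    have hlog : 0 ≤ Real.logb 2 n := Real.logb_nonneg one_lt_two (by exact_mod_cast hn)
    by_cases hsmall : n < 2 * N + 2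
    · have := Finset.single_le_sum (f := fun j => |f j|) (fun j _ => abs_nonneg (f j))
        (Finset.mem_range.2 hsmall)
      nlinarith
    · -- `f (2 * j) = f j`: halving `n` changes `f` by at most `ε` and lowers `logb 2 n` by one.
      set j := n / 2
      have hj : 0 < j := by omega
      have hdouble : f (2 * j) = f j := by rw [hmul 2 j two_pos hj, h2, zero_add]
      have hstep : |f n - f j| ≤ ε := by
        obtain hn2 | hn2 : n = 2 * j ∨ n = 2 * j + 1 := by omega
        · rw [hn2, hdouble, sub_self, abs_zero]
          exact hε.le
        · have := hN (2 * j) (by omega)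
          rw [Real.dist_eq, sub_zero] at this
          rw [hn2, ← hdouble]
          exact this.le
      have hlog_half : Real.logb 2 j + 1 ≤ Real.logb 2 n := by
        rw [← Real.logb_self_eq_one one_lt_two, ← Real.logb_mul (by positivity) two_ne_zero]
        exact Real.logb_le_logb_of_le one_lt_two (by positivity)
          (by exact_mod_cast (by omega : j * 2 ≤ n))
      have := ih j (by omega) hj
      have := abs_sub_abs_le_abs_sub (f n) (f j)
      nlinarith

theorem eq_zero_of_map_mul_of_tendsto_sub {f : ℕ → ℝ}
    (hmul : ∀ a b, 0 < a → 0 < b → f (a * b) = f a + f b) (h2 : f 2 = 0)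
    (hd : Tendsto (fun n => f (n + 1) - f n) atTop (𝓝 0)) {m : ℕ} (hm : 0 < m) : f m = 0 := by
  have hbound : ∀ ε > 0, |f m| ≤ ε * Real.logb 2 m := by
    intro ε hε
    obtain ⟨C, hC⟩ := exists_abs_le_add_mul_logb hmul h2 hd hε
    have hk : ∀ k : ℕ, 0 < k → |f m| ≤ C / k + ε * Real.logb 2 m := by
      intro k hk
      have hk' : (0 : ℝ) < k := by exact_mod_cast hk
      have := hC (m ^ k) (pow_pos hm k)
      rw [map_pow_of_map_mul hmul hm, Nat.cast_pow, Real.logb_pow, abs_mul, Nat.abs_cast] at this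
      rw [div_add' _ _ _ hk'.ne', le_div_iff₀ hk']
      linarith
    have hlim :
        Tendsto (fun k : ℕ => C / k + ε * Real.logb 2 m) atTop (𝓝 (ε * Real.logb 2 m)) := by
      simpa using (tendsto_const_div_atTop_nhds_zero_nat C).add_const (ε * Real.logb 2 m)
    exact ge_of_tendsto hlim (eventually_atTop.2 ⟨1, hk⟩)
  have hlim : Tendsto (fun j : ℕ => 1 / ((j : ℝ) + 1) * Real.logb 2 m) atTop (𝓝 0) := by
    simpa using tendsto_one_div_add_atTop_nhds_zero_nat.mul_const (Real.logb 2 m)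
  exact abs_nonpos_iff.1
    (ge_of_tendsto hlim (Eventually.of_forall fun j => hbound _ (by positivity)))

def Admissible (L : List ℝ) : Prop := (∀ x ∈ L, 0 ≤ x) ∧ 0 < L.sum

lemma admissible_replicate_one {n : ℕ} (hn : 0 < n) : Admissible (List.replicate n 1) :=
  ⟨fun x hx => (List.eq_of_mem_replicate hx).symm ▸ zero_le_one, by simpa using hn⟩

lemma admissible_ofFn_iff {n : ℕ} {v : Fin n → ℝ} :
    Admissible (List.ofFn v) ↔ (∀ i, 0 ≤ v i) ∧ 0 < ∑ i, v i := by
  simp [Admissible, List.mem_ofFn, List.sum_ofFn]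

structure IsContinuousHomogeneousCocycle (D : List ℝ → ℝ) : Prop where
  map_mul : ∀ c : ℝ, 0 < c → ∀ L, Admissible L → D (L.map fun x => c * x) = c * D L
  flatten : ∀ P : List (List ℝ), (∀ B ∈ P, Admissible B) →
    D P.flatten = D (P.map List.sum) + (P.map D).sum
  continuousOn : ∀ n : ℕ, ContinuousOn (fun v : Fin n → ℝ => D (List.ofFn v))
    {v | (∀ i, 0 ≤ v i) ∧ 0 < ∑ i, v i}

namespace IsContinuousHomogeneousCocycle

variable {D : List ℝ → ℝ}

lemma apply_singleton (hD : IsContinuousHomogeneousCocycle D) {x : ℝ} (hx : 0 < x) :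
    D [x] = 0 := by
  have := hD.flatten [[x]] (by simp [Admissible, hx.le, hx])
  simp only [List.flatten_cons, List.flatten_nil, List.append_nil, List.map_cons, List.map_nil,
    List.sum_cons, List.sum_nil, add_zero] at this
  linarith

lemma apply_append (hD : IsContinuousHomogeneousCocycle D) {A B : List ℝ}
    (hA : Admissible A) (hB : Admissible B) :
    D (A ++ B) = D [A.sum, B.sum] + D A + D B := by
  have := hD.flatten [A, B] (by simp [hA, hB])
  simpa [add_assoc] using this

lemma apply_one_zero (hD : IsContinuousHomogeneousCocycle D) : D [1, 0] = 0 := by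
  -- `[a, 0, 1]` splits both as `[a, 0] ++ [1]` and as `[a] ++ [0, 1]`.
  have hzero : ∀ a : ℝ, 0 < a → D [a, 0] = D [0, 1] := fun a ha => by
    have h₁ := hD.flatten [[a, 0], [1]] (by simp [Admissible, ha.le, ha])
    have h₂ := hD.flatten [[a], [0, 1]] (by simp [Admissible, ha.le, ha])
    simp only [List.flatten_cons, List.flatten_nil, List.append_nil, List.cons_append,
      List.nil_append, List.map_cons, List.map_nil, List.sum_cons, List.sum_nil, add_zero,
      zero_add, hD.apply_singleton ha, hD.apply_singleton one_pos] at h₁ h₂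
    linarith
  have hscale := hD.map_mul 2 two_pos [1, 0] (by simp [Admissible])
  simp only [List.map_cons, List.map_nil, mul_one, mul_zero] at hscale
  linarith [hzero 1 one_pos, hzero 2 two_pos]

lemma apply_replicate_mul (hD : IsContinuousHomogeneousCocycle D) {a b : ℕ} (ha : 0 < a)
    (hb : 0 < b) :
    D (List.replicate (a * b) 1) = a * D (List.replicate b 1) + b * D (List.replicate a 1) := by
  have hblocks := hD.flatten (List.replicate b (List.replicate a 1))
    fun B hB => (List.eq_of_mem_replicate hB) ▸ admissible_replicate_one ha
  have hscale := hD.map_mul a (by exact_mod_cast ha) _ (admissible_replicate_one hb)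
  simp only [List.flatten_replicate_replicate, List.map_replicate, List.sum_replicate,
    nsmul_eq_mul, mul_one] at hblocks hscale
  rw [mul_comm a b, hblocks, hscale]

lemma apply_replicate_succ (hD : IsContinuousHomogeneousCocycle D) {n : ℕ} (hn : 0 < n) :
    D (List.replicate (n + 1) 1) = D [n, 1] + D (List.replicate n 1) := by
  have := hD.apply_append (admissible_replicate_one hn) (admissible_replicate_one one_pos)
  simpa [List.replicate_add, hD.apply_singleton one_pos] using this

lemma tendsto_apply_natCast_one_div (hD : IsContinuousHomogeneousCocycle D) :
    Tendsto (fun n : ℕ => D [n, 1] / (n + 1)) atTop (𝓝 0) := by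
  set p : ℕ → Fin 2 → ℝ := fun n => ![n / (n + 1), 1 / (n + 1)]
  have hp : Tendsto p atTop (𝓝 ![1, 0]) := by
    refine tendsto_pi_nhds.2 fun i => ?_
    fin_cases i
    · simpa [p] using tendsto_natCast_div_add_atTop (1 : ℝ)
    · simpa [p] using tendsto_one_div_add_atTop_nhds_zero_nat (𝕜 := ℝ)
  have hpS : ∀ n, (∀ i, 0 ≤ p n i) ∧ 0 < ∑ i, p n i := fun n => by
    simp only [p, Fin.forall_fin_two, Fin.sum_univ_two, Matrix.cons_val_zero, Matrix.cons_val_one]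
    exact ⟨⟨by positivity, by positivity⟩, by positivity⟩
  have hscale : ∀ n : ℕ, D (List.ofFn (p n)) = D [n, 1] / (n + 1) := fun n => by
    have hn : (0 : ℝ) < n + 1 := by positivity
    have := hD.map_mul (n + 1) hn _ (admissible_ofFn_iff.2 (hpS n))
    simp only [p, List.ofFn_succ, List.ofFn_zero, Matrix.cons_val_zero, Matrix.cons_val_succ,
      Matrix.cons_val_fin_one, List.map_cons, List.map_nil, mul_div_cancel₀ _ hn.ne'] at this ⊢
    rw [this, mul_div_cancel_left₀ _ hn.ne']
  have hlim := (hD.continuousOn 2 ![1, 0] (by simp [Fin.sum_univ_two])).tendsto.comp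
    (tendsto_nhdsWithin_iff.2 ⟨hp, Eventually.of_forall hpS⟩)
  rw [← hD.apply_one_zero]
  exact hlim.congr hscale

lemma apply_replicate_one_eq_zero (hD : IsContinuousHomogeneousCocycle D) (h11 : D [1, 1] = 0)
    {n : ℕ} (hn : 0 < n) :
    D (List.replicate n 1) = 0 := by
  have hf : D (List.replicate n 1) / n = 0 := by
    refine eq_zero_of_map_mul_of_tendsto_sub (f := fun m => D (List.replicate m 1) / m)
      (fun a b ha hb => ?_) (by simpa using h11) ?_ hn
    · have : (0 : ℝ) < a := by exact_mod_cast ha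
      have : (0 : ℝ) < b := by exact_mod_cast hb
      simp only [hD.apply_replicate_mul ha hb, Nat.cast_mul]
      field_simp
      ring
    · simp only [Nat.cast_add_one]
      refine tendsto_sub_div_of_tendsto_sub_div (g := fun m => D (List.replicate m 1))
        (hD.tendsto_apply_natCast_one_div.congr' ?_)
      filter_upwards [eventually_gt_atTop 0] with n hn
      rw [hD.apply_replicate_succ hn, add_sub_cancel_right]
  have : (0 : ℝ) < n := by exact_mod_cast hn
  simpa [this.ne'] using hf

lemma apply_map_natCast_eq_zero (hD : IsContinuousHomogeneousCocycle D) (h11 : D [1, 1] = 0)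
    {k : List ℕ} (hk : ∀ a ∈ k, 0 < a) (hne : k ≠ []) : D (k.map Nat.cast) = 0 := by
  have hflat : (k.map fun a => List.replicate a (1 : ℝ)).flatten = List.replicate k.sum 1 := by
    clear hk hne
    induction k with
    | nil => rfl
    | cons a k ih => rw [List.map_cons, List.flatten_cons, ih, List.sum_cons, List.replicate_add]
  have hsum : 0 < k.sum := by
    obtain ⟨a, t, rfl⟩ := List.exists_cons_of_ne_nil hne
    simpa using Nat.add_pos_left (hk a (by simp)) t.sum
  have hblocks := hD.flatten (k.map fun a => List.replicate a 1)
    (by simpa using fun a ha => admissible_replicate_one (hk a ha))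
  simp only [hflat, List.map_map, Function.comp_def, List.sum_replicate, nsmul_eq_mul, mul_one,
    hD.apply_replicate_one_eq_zero h11 hsum] at hblocks
  rw [List.map_congr_left fun a ha => hD.apply_replicate_one_eq_zero h11 (hk a ha)] at hblocks
  simpa using hblocks.symm

lemma apply_ofFn_natCast_div_eq_zero (hD : IsContinuousHomogeneousCocycle D) (h11 : D [1, 1] = 0)
    {n N : ℕ} (hn : 0 < n) (hN : 0 < N) (k : Fin n → ℕ) (hk : ∀ i, 0 < k i) :
    D (List.ofFn fun i => (k i : ℝ) / N) = 0 := by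
  have hN' : (0 : ℝ) < N := by exact_mod_cast hN
  have hscale := hD.map_mul N hN' (List.ofFn fun i => (k i : ℝ) / N)
    (admissible_ofFn_iff.2 ⟨fun i => by positivity, Finset.sum_pos (fun i _ => by
      have := hk i; positivity) (Finset.univ_nonempty_iff.2 ⟨⟨0, hn⟩⟩)⟩)
  have hint := hD.apply_map_natCast_eq_zero h11 (k := List.ofFn k)
    (by simpa [List.mem_ofFn] using hk) (by simpa using hn.ne')
  simp only [List.map_ofFn, Function.comp_def, mul_div_cancel₀ _ hN'.ne'] at hscale hint
  rw [hint] at hscale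
  exact (mul_eq_zero.1 hscale.symm).resolve_left hN'.ne'

lemma apply_eq_zero (hD : IsContinuousHomogeneousCocycle D) (h11 : D [1, 1] = 0) {L : List ℝ}
    (hL : Admissible L) : D L = 0 := by
  set x : Fin L.length → ℝ := L.get
  have hx : List.ofFn x = L := List.ofFn_get L
  have hxS : (∀ i, 0 ≤ x i) ∧ 0 < ∑ i, x i := admissible_ofFn_iff.1 (by rwa [hx])
  have hlen : 0 < L.length := List.length_pos_of_ne_nil (by rintro rfl; simp [Admissible] at hL)
  -- Approximation from above keeps every numerator positive, so no block in `flatten` is empty.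
  set w : ℕ → Fin L.length → ℝ := fun j i => ((⌊x i * j⌋₊ + 1 : ℕ) : ℝ) / j
  have hw : Tendsto w atTop (𝓝 x) :=
    tendsto_pi_nhds.2 fun i => tendsto_natFloor_mul_add_one_div (hxS.1 i)
  have hxw : ∀ j : ℕ, 0 < j → ∀ i, x i ≤ w j i := fun j hj i => by
    have hj' : (0 : ℝ) < j := by exact_mod_cast hj
    rw [le_div_iff₀ hj']
    push_cast
    linarith [Nat.lt_floor_add_one (x i * j)]
  have hwS :
      ∀ᶠ j in atTop, w j ∈ {v : Fin _ → ℝ | (∀ i, 0 ≤ v i) ∧ 0 < ∑ i, v i} :=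
    (eventually_gt_atTop 0).mono fun j hj => ⟨fun i => (hxS.1 i).trans (hxw j hj i),
      hxS.2.trans_le (Finset.sum_le_sum fun i _ => hxw j hj i)⟩
  have hlim :=
    (hD.continuousOn _ x hxS).tendsto.comp (tendsto_nhdsWithin_iff.2 ⟨hw, hwS⟩)
  rw [← hx]
  refine tendsto_nhds_unique hlim (tendsto_const_nhds.congr' ?_)
  filter_upwards [eventually_gt_atTop 0] with j hj
  exact (hD.apply_ofFn_natCast_div_eq_zero h11 hlen hj _ fun i => Nat.succ_pos _).symm

lemma sub {F G : List ℝ → ℝ} (hF : IsContinuousHomogeneousCocycle F)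
    (hG : IsContinuousHomogeneousCocycle G) :
    IsContinuousHomogeneousCocycle fun L => F L - G L where
  map_mul c hc L hL := by rw [hF.map_mul c hc L hL, hG.map_mul c hc L hL, mul_sub]
  flatten P hP := by
    rw [hF.flatten P hP, hG.flatten P hP, List.sum_map_sub]
    ring
  continuousOn n := (hF.continuousOn n).sub (hG.continuousOn n)

theorem eq_of_apply_one_one {F G : List ℝ → ℝ} (hF : IsContinuousHomogeneousCocycle F)
    (hG : IsContinuousHomogeneousCocycle G) (h : F [1, 1] = G [1, 1]) {L : List ℝ}
    (hL : Admissible L) : F L = G L :=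
  sub_eq_zero.1 ((hF.sub hG).apply_eq_zero (sub_eq_zero.2 h) hL)

end IsContinuousHomogeneousCocycle

noncomputable def bitEntropy (L : List ℝ) : ℝ :=
  (L.map fun x => x * Real.logb 2 (1 / x)).sum - L.sum * Real.logb 2 (1 / L.sum)

lemma mul_logb_two_one_div (x : ℝ) :
    x * Real.logb 2 (1 / x) = Real.negMulLog x / Real.log 2 := by
  rw [Real.logb, one_div, Real.log_inv, Real.negMulLog]
  ring

lemma bitEntropy_eq (L : List ℝ) :
    bitEntropy L = ((L.map Real.negMulLog).sum - Real.negMulLog L.sum) / Real.log 2 := by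
  simp only [bitEntropy, mul_logb_two_one_div]
  simp only [div_eq_mul_inv, List.sum_map_mul_right]
  ring

lemma bitEntropy_map_mul (c : ℝ) (L : List ℝ) :
    bitEntropy (L.map fun x => c * x) = c * bitEntropy L := by
  have hsum : (L.map fun x => c * x).sum = c * L.sum := by
    simpa using List.sum_map_mul_left L id c
  simp only [bitEntropy_eq, hsum, List.map_map, Function.comp_def, Real.negMulLog_mul,
    List.sum_map_add, List.sum_map_mul_left, List.sum_map_mul_right, List.map_id']
  ring

lemma bitEntropy_flatten (P : List (List ℝ)) :
    bitEntropy P.flatten = bitEntropy (P.map List.sum) + (P.map bitEntropy).sum := by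
  simp only [funext bitEntropy_eq, List.sum_map_sub, div_eq_mul_inv, List.sum_map_mul_right,
    List.map_flatten, List.sum_flatten, List.map_map, Function.comp_def]
  ring

lemma continuous_bitEntropy_ofFn (n : ℕ) :
    Continuous fun v : Fin n → ℝ => bitEntropy (List.ofFn v) := by
  simp only [bitEntropy_eq, List.map_ofFn, List.sum_ofFn, Function.comp_def]
  fun_prop

lemma bitEntropy_one_one : bitEntropy [1, 1] = 2 := by
  simp only [bitEntropy, one_div, Real.logb_inv, mul_neg, List.map_cons, Real.logb_one, mul_zero,
    neg_zero, List.map_nil, List.sum_cons, List.sum_nil, add_zero, sub_neg_eq_add, zero_add]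
  norm_num

lemma isContinuousHomogeneousCocycle_bitEntropy : IsContinuousHomogeneousCocycle bitEntropy where
  map_mul c _ L _ := bitEntropy_map_mul c L
  flatten P _ := bitEntropy_flatten P
  continuousOn n := (continuous_bitEntropy_ofFn n).continuousOn

theorem shannon_entropy_homogeneous_characterization_general
    (Hhat : List ℝ → ℝ)
    (h_hom : ∀ c : ℝ, 0 < c → ∀ L : List ℝ, (∀ x ∈ L, 0 ≤ x) → 0 < L.sum →
      Hhat (L.map (fun x => c * x)) = c * Hhat L)
    (h_cocycle : ∀ P : List (List ℝ),
      (∀ B ∈ P, (∀ x ∈ B, 0 ≤ x) ∧ 0 < B.sum) →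
      Hhat P.flatten = Hhat (P.map List.sum) + (P.map Hhat).sum)
    (h_cont : ∀ n : ℕ, ContinuousOn (fun v : Fin n → ℝ => Hhat (List.ofFn v))
      {v : Fin n → ℝ | (∀ i, 0 ≤ v i) ∧ 0 < ∑ i, v i})
    (h_norm : Hhat [1, 1] = 2) :
    ∀ L : List ℝ, (∀ x ∈ L, 0 ≤ x) → 0 < L.sum →
      Hhat L = (L.map (fun x => x * Real.logb 2 (1 / x))).sum
        - L.sum * Real.logb 2 (1 / L.sum) := by
  have hH : IsContinuousHomogeneousCocycle Hhat :=
    ⟨fun c hc L hL => h_hom c hc L hL.1 hL.2, h_cocycle, h_cont⟩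
  intro L hL₀ hL
  exact hH.eq_of_apply_one_one isContinuousHomogeneousCocycle_bitEntropy
    (h_norm.trans bitEntropy_one_one.symm) ⟨hL₀, hL⟩

/-- **Characterization of Shannon entropy** (homogeneous form).
`Hhat` is a real-valued function on finite sequences (modelled as lists) of
nonnegative reals with positive sum.  If it is homogeneous, symmetric,
satisfies the 2-cocycle equation, is continuous (for each fixed number of
arguments, on the relevant domain) and `Hhat (1,1) = 2`, then
`Hhat (a₁,…,aₙ) = u a₁ + … + u aₙ - u (a₁+…+aₙ)` where `u x = x·log₂(1/x)`
(note `x * Real.logb 2 (1/x)` equals `0` at `x = 0`, matching `u 0 = 0`). -/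
theorem shannon_entropy_homogeneous_characterization
    (Hhat : List ℝ → ℝ)
    (h_hom : ∀ c : ℝ, 0 < c → ∀ L : List ℝ, (∀ x ∈ L, 0 ≤ x) → 0 < L.sum →
      Hhat (L.map (fun x => c * x)) = c * Hhat L)
    (h_symm : ∀ L M : List ℝ, L.Perm M → (∀ x ∈ L, 0 ≤ x) → 0 < L.sum →
      Hhat L = Hhat M)
    (h_cocycle : ∀ P : List (List ℝ),
      (∀ B ∈ P, (∀ x ∈ B, 0 ≤ x) ∧ 0 < B.sum) →
      Hhat P.flatten = Hhat (P.map List.sum) + (P.map Hhat).sum)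
    (h_cont : ∀ n : ℕ, ContinuousOn (fun v : Fin n → ℝ => Hhat (List.ofFn v))
      {v : Fin n → ℝ | (∀ i, 0 ≤ v i) ∧ 0 < ∑ i, v i})
    (h_norm : Hhat [1, 1] = 2) :
    ∀ L : List ℝ, (∀ x ∈ L, 0 ≤ x) → 0 < L.sum →
      Hhat L = (L.map (fun x => x * Real.logb 2 (1 / x))).sum
        - L.sum * Real.logb 2 (1 / L.sum) :=
  shannon_entropy_homogeneous_characterization_general Hhat h_hom h_cocycle h_cont h_norm
end

section
/- (Mercer) Let (aₙ) be a sequence of real numbers and let sₙ = a₁ + … + aₙ denote its n-th partial sum. Then for a real number a, the sequence aₙ converges to a if and only if the sequence aₙ + sₙ/n converges to 2a. -/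
set_option maxHeartbeats 800000

open Filter Topology

private lemma icc_eq_range_shift (u : ℕ → ℝ) (n : ℕ) :
    ∑ i ∈ Finset.Icc 1 n, u i = ∑ i ∈ Finset.range n, u (i + 1) := by
  rw [← Finset.Ico_add_one_right_eq_Icc, Finset.sum_Ico_eq_sum_range]
  simp [Nat.add_comm]

private lemma cesaro_Icc {u : ℕ → ℝ} {l : ℝ} (h : Tendsto u atTop (𝓝 l)) :
    Tendsto (fun n : ℕ => (∑ i ∈ Finset.Icc 1 n, u i) / n) atTop (𝓝 l) := by
  have h1 : Tendsto (fun n : ℕ => u (n + 1)) atTop (𝓝 l) :=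
    h.comp (tendsto_add_atTop_nat 1)
  apply h1.cesaro.congr
  intro n
  rw [icc_eq_range_shift, div_eq_inv_mul]

private lemma mercer_key (a : ℕ → ℝ) (n : ℕ) :
    ((n : ℝ) + 1) * (∑ i ∈ Finset.Icc 1 n, a i) =
      ∑ k ∈ Finset.Icc 1 n, (k : ℝ) * (a k + (∑ i ∈ Finset.Icc 1 k, a i) / k) := by
  induction n with
  | zero => simp
  | succ n ih =>
    have hstep : ∑ i ∈ Finset.Icc 1 (n + 1), a i = (∑ i ∈ Finset.Icc 1 n, a i) + a (n + 1) :=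
      Finset.sum_Icc_succ_top (Nat.le_add_left 1 n) a
    rw [Finset.sum_Icc_succ_top (Nat.le_add_left 1 n)
      (fun k : ℕ => (k : ℝ) * (a k + (∑ i ∈ Finset.Icc 1 k, a i) / k)), ← ih, hstep]
    have hn : ((n : ℝ) + 1) ≠ 0 := by positivity
    push_cast
    field_simp
    ring

/-- **Mercer's theorem.** For a real sequence `a₁, a₂, …` with partial sums
`sₙ = a₁ + … + aₙ`, the sequence `aₙ` converges to `a` if and only if
`aₙ + sₙ/n` converges to `2a`.  (The sequence is indexed so that `a n` for
`n ≥ 1` are its terms; `s n = ∑_{i=1}^n a i`.) -/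
theorem mercer_theorem (a : ℕ → ℝ) (A : ℝ) :
    Tendsto (fun n : ℕ => a n) atTop (nhds A) ↔
      Tendsto (fun n : ℕ => a n + (∑ i ∈ Finset.Icc 1 n, a i) / n) atTop
        (nhds (2 * A)) := by
  set s : ℕ → ℝ := fun n => ∑ i ∈ Finset.Icc 1 n, a i with hs
  set b : ℕ → ℝ := fun n => a n + s n / n with hb
  constructor
  · intro h
    have h2 := cesaro_Icc h
    rw [two_mul]
    exact h.add h2
  · intro h
    have hb0 : Tendsto (fun n => b n - 2 * A) atTop (𝓝 0) :=
      tendsto_sub_nhds_zero_iff.2 h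
    have hf : (fun k : ℕ => (k : ℝ) * (b k - 2 * A)) =o[atTop] (fun k : ℕ => (k : ℝ)) := by
      have := (Asymptotics.isBigO_refl (fun k : ℕ => (k : ℝ)) atTop).mul_isLittleO
        ((Asymptotics.isLittleO_one_iff ℝ).2 hb0)
      simpa using this
    have hg : Tendsto (fun n : ℕ => ∑ i ∈ Finset.range n, (i : ℝ)) atTop atTop := by
      apply tendsto_atTop_mono' atTop ?_
        (tendsto_atTop_add_const_right atTop (-1) tendsto_natCast_atTop_atTop)
      filter_upwards [eventually_ge_atTop 1] with n hn
      calc (n : ℝ) + (-1) = ((n - 1 : ℕ) : ℝ) := by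
            rw [Nat.cast_sub hn]; push_cast; ring
        _ ≤ ∑ i ∈ Finset.range n, (i : ℝ) :=
            Finset.single_le_sum (fun i _ => by positivity)
              (Finset.mem_range.2 (by omega))
    have hsum := hf.sum_range (fun i => by positivity) hg
    have hT := hsum.tendsto_div_nhds_zero
    have hT' := hT.comp (tendsto_add_atTop_nat 1)
    -- s n / n is eventually equal to A + (T (n+1) / S (n+1)) / 2
    have hSn : ∀ n : ℕ, (∑ i ∈ Finset.range (n + 1), (i : ℝ)) * 2 = (n : ℝ) * (n + 1) := by
      intro n
      have := Finset.sum_range_id_mul_two (n + 1)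
      have : ((∑ i ∈ Finset.range (n + 1), i) * 2 : ℕ) = ((n + 1) * n : ℕ) := by
        rw [this]; simp
      calc (∑ i ∈ Finset.range (n + 1), (i : ℝ)) * 2
          = (((∑ i ∈ Finset.range (n + 1), i) * 2 : ℕ) : ℝ) := by push_cast; ring
        _ = (((n + 1) * n : ℕ) : ℝ) := by rw [this]
        _ = (n : ℝ) * (n + 1) := by push_cast; ring
    have hTb : ∀ n : ℕ, ∑ i ∈ Finset.range (n + 1), (i : ℝ) * b i = ((n : ℝ) + 1) * s n := by
      intro n
      rw [Finset.sum_range_succ' (fun i => (i : ℝ) * b i) n,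
        ← icc_eq_range_shift (fun k => (k : ℝ) * b k) n]
      simp only [hb, hs]
      rw [← mercer_key a n]
      push_cast
      ring
    have heq : ∀ᶠ n : ℕ in atTop, s n / n =
        A + ((∑ i ∈ Finset.range (n + 1), (i : ℝ) * (b i - 2 * A)) /
          (∑ i ∈ Finset.range (n + 1), (i : ℝ))) / 2 := by
      filter_upwards [eventually_ge_atTop 1] with n hn
      have hn0 : (n : ℝ) ≠ 0 := Nat.cast_ne_zero.2 (by omega)
      have hS : (∑ i ∈ Finset.range (n + 1), (i : ℝ)) = (n : ℝ) * (n + 1) / 2 := by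
        have := hSn n; linarith
      have hnum : ∑ i ∈ Finset.range (n + 1), (i : ℝ) * (b i - 2 * A)
          = ((n : ℝ) + 1) * s n - 2 * A * ((n : ℝ) * (n + 1) / 2) := by
        have : ∀ i : ℕ, (i : ℝ) * (b i - 2 * A) = (i : ℝ) * b i - 2 * A * (i : ℝ) := by
          intro i; ring
        rw [Finset.sum_congr rfl fun i _ => this i, Finset.sum_sub_distrib,
          ← Finset.mul_sum, hTb n, hS]
      rw [hnum, hS]
      have hn1 : (n : ℝ) + 1 ≠ 0 := by positivity
      field_simp
      ring
    have hsA : Tendsto (fun n : ℕ => s n / n) atTop (𝓝 A) := by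
      have : Tendsto (fun n : ℕ => A +
          ((∑ i ∈ Finset.range (n + 1), (i : ℝ) * (b i - 2 * A)) /
            (∑ i ∈ Finset.range (n + 1), (i : ℝ))) / 2) atTop (𝓝 (A + 0 / 2)) :=
        tendsto_const_nhds.add (hT'.div_const 2)
      rw [show A + 0 / 2 = A by ring] at this
      exact this.congr' (heq.mono fun n h => h.symm)
    have : Tendsto (fun n : ℕ => b n - s n / n) atTop (𝓝 (2 * A - A)) := h.sub hsA
    rw [show 2 * A - A = A by ring] at this
    exact this.congr fun n => by simp [hb]
end

section
/- Let H be a real-valued function on finite probability vectors and let Ĥ be its homogeneous extension to finite sequences (a₁,…,aₙ) of nonnegative reals with s = a₁+…+aₙ > 0, defined by Ĥ(a₁,…,aₙ) = s·H(a₁/s,…,aₙ/s). Then H satisfies the grouping axiom (H(a₁p₁,…,a_kp₁, b₁p₂,…,b_lp₂, …, c₁pₙ,…,c_mpₙ) = H(p₁,…,pₙ) + p₁H(a₁,…,a_k) + … + pₙH(c₁,…,c_m) whenever each block (a₁,…,a_k), (b₁,…,b_l), …, (c₁,…,c_m) and (p₁,…,pₙ) are probability vectors) if and only if Ĥ satisfies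 the 2-cocycle equation: Ĥ(a₁,…,a_k, b₁,…,b_l, …, c₁,…,c_m) = Ĥ(a₁+…+a_k, b₁+…+b_l, …, c₁+…+c_m) + Ĥ(a₁,…,a_k) + Ĥ(b₁,…,b_l) + … + Ĥ(c₁,…,c_m) for all finite sequences of nonnegative reals each having positive sum. -/
/-!
Normalising the blocks of a cocycle instance turns it into a grouping instance, and conversely a
grouping instance is the cocycle equation for the blocks `pᵢ • bᵢ`, because
`Ĥ (pᵢ • bᵢ) = pᵢ * H bᵢ` by homogeneity.

The subtlety is that grouping allows weights `pᵢ = 0`, i.e. blocks of mass zero, which the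
cocycle equation excludes. The cocycle equation on `[a, 0, b]` gives `Ĥ [a, 0] = Ĥ [0, b]` for all
`a, b > 0`, and homogeneity then forces both to vanish; hence `Ĥ` ignores zero entries, and the
cocycle equation extends to all blocks of nonnegative reals.
-/

open Filter Topology

/-- The homogeneous extension of a function `H` on probability vectors:
`Ĥ (a₁,…,aₙ) = s · H (a₁/s, …, aₙ/s)` where `s = a₁ + … + aₙ`. -/
noncomputable def homogeneousExtension (H : List ℝ → ℝ) : List ℝ → ℝ :=
  fun L => L.sum * H (L.map (fun x => x / L.sum))

lemma List.sum_map_div_right (l : List ℝ) (r : ℝ) : (l.map (· / r)).sum = l.sum / r := by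
  simpa [div_eq_mul_inv] using List.sum_map_mul_right l id r⁻¹

def SatisfiesGrouping (H : List ℝ → ℝ) : Prop :=
  ∀ (p : List ℝ) (B : List (List ℝ)), p.length = B.length →
    (∀ x ∈ p, 0 ≤ x) → p.sum = 1 →
    (∀ b ∈ B, (∀ x ∈ b, 0 ≤ x) ∧ b.sum = 1) →
    H ((List.zipWith (fun pi b => b.map (fun x => x * pi)) p B).flatten) =
      H p + (List.zipWith (fun pi b => pi * H b) p B).sum

def IsTwoCocycle (F : List ℝ → ℝ) : Prop :=
  ∀ P : List (List ℝ), (∀ B ∈ P, (∀ x ∈ B, 0 ≤ x) ∧ 0 < B.sum) →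
    F P.flatten = F (P.map List.sum) + (P.map F).sum

namespace IsTwoCocycle

variable {F : List ℝ → ℝ}

lemma apply_append (hF : IsTwoCocycle F) {A B : List ℝ} (hA : ∀ x ∈ A, 0 ≤ x)
    (hB : ∀ x ∈ B, 0 ≤ x) (hA₀ : 0 < A.sum) (hB₀ : 0 < B.sum) :
    F (A ++ B) = F [A.sum, B.sum] + F A + F B := by
  have := hF [A, B] (by simp_all)
  simp_all [add_assoc]

lemma apply_singleton (hF : IsTwoCocycle F) {s : ℝ} (hs : 0 < s) : F [s] = 0 := by
  have := hF [[s]] (by simp [hs.le, hs])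
  simp_all

lemma apply_pair_zero_left_eq (hF : IsTwoCocycle F) {a b : ℝ} (ha : 0 < a) (hb : 0 < b) :
    F [a, 0] = F [0, b] := by
  have h₁ := hF.apply_append (A := [a, 0]) (B := [b]) (by simp [ha.le]) (by simp [hb.le])
    (by simpa using ha) (by simpa using hb)
  have h₂ := hF.apply_append (A := [a]) (B := [0, b]) (by simp [ha.le]) (by simp [hb.le])
    (by simpa using ha) (by simpa using hb)
  simp only [List.cons_append, List.nil_append, List.sum_cons, List.sum_nil, add_zero,
    zero_add] at h₁ h₂
  linarith [hF.apply_singleton ha, hF.apply_singleton hb]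

end IsTwoCocycle

section
variable (H : List ℝ → ℝ)

lemma homogeneousExtension_of_sum_eq_zero {L : List ℝ} (h : L.sum = 0) :
    homogeneousExtension H L = 0 := by
  simp [homogeneousExtension, h]

lemma homogeneousExtension_of_sum_eq_one {L : List ℝ} (h : L.sum = 1) :
    homogeneousExtension H L = H L := by
  simp [homogeneousExtension, h]

lemma homogeneousExtension_map_mul_right (L : List ℝ) (c : ℝ) :
    homogeneousExtension H (L.map (· * c)) = c * homogeneousExtension H L := by
  rcases eq_or_ne c 0 with rfl | hc
  · simp [homogeneousExtension]
  have hsum : (L.map (· * c)).sum = L.sum * c := by simpa using List.sum_map_mul_right L id c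
  have hnorm : (L.map (· * c)).map (· / (L.sum * c)) = L.map (· / L.sum) := by
    simp only [List.map_map]
    exact List.map_congr_left fun x _ => mul_div_mul_right x _ hc
  simp only [homogeneousExtension, hsum, hnorm]
  ring

lemma homogeneousExtension_singleton (c : ℝ) : homogeneousExtension H [c] = c * H [1] := by
  simpa [homogeneousExtension_of_sum_eq_one] using homogeneousExtension_map_mul_right H [1] c

end

namespace IsTwoCocycle

variable {H : List ℝ → ℝ}

local notation "Ĥ" => homogeneousExtension H

lemma homogeneousExtension_singleton_eq_zero (hc : IsTwoCocycle Ĥ) (c : ℝ) : Ĥ [c] = 0 := by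
  have h₁ : H [1] = 0 := by
    simpa [homogeneousExtension_of_sum_eq_one] using hc.apply_singleton one_pos
  simp [_root_.homogeneousExtension_singleton, h₁]

lemma homogeneousExtension_one_zero (hc : IsTwoCocycle Ĥ) : Ĥ [1, 0] = 0 ∧ Ĥ [0, 1] = 0 := by
  have h₁ := hc.apply_pair_zero_left_eq one_pos one_pos
  have h₂ := hc.apply_pair_zero_left_eq two_pos one_pos
  have h₂₀ : Ĥ [2, 0] = 2 * Ĥ [1, 0] := by
    simpa using homogeneousExtension_map_mul_right H [1, 0] 2
  constructor <;> linarith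

lemma homogeneousExtension_zero_cons (hc : IsTwoCocycle Ĥ) {L : List ℝ} (hL : ∀ x ∈ L, 0 ≤ x) :
    Ĥ (0 :: L) = Ĥ L := by
  rcases (List.sum_nonneg hL).eq_or_lt with hs | hs
  · rw [homogeneousExtension_of_sum_eq_zero H (by simp [← hs]),
      homogeneousExtension_of_sum_eq_zero H hs.symm]
  have h₁ := hc.apply_append (A := [1, 0]) (by simp) hL (by simp) hs
  have h₂ := hc.apply_append (A := [1]) (B := 0 :: L) (by simp)
    (List.forall_mem_cons.mpr ⟨le_rfl, hL⟩) (by simp)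
    (by simpa using hs)
  simp only [List.cons_append, List.nil_append, List.sum_cons, List.sum_nil, add_zero,
    zero_add] at h₁ h₂
  linarith [hc.homogeneousExtension_one_zero.1, hc.homogeneousExtension_singleton_eq_zero 1]

lemma homogeneousExtension_append_zero (hc : IsTwoCocycle Ĥ) {L : List ℝ}
    (hL : ∀ x ∈ L, 0 ≤ x) : Ĥ (L ++ [0]) = Ĥ L := by
  rcases (List.sum_nonneg hL).eq_or_lt with hs | hs
  · rw [homogeneousExtension_of_sum_eq_zero H (by simp [← hs]),
      homogeneousExtension_of_sum_eq_zero H hs.symm]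
  have h₁ := hc.apply_append (B := [0, 1]) hL (by simp) hs (by simp)
  have h₂ := hc.apply_append (A := L ++ [0]) (B := [1])
    (List.forall_mem_append.mpr ⟨hL, by simp⟩) (by simp)
    (by simpa using hs) (by simp)
  simp only [List.append_assoc, List.cons_append, List.nil_append, List.sum_append,
    List.sum_cons, List.sum_nil, add_zero, zero_add] at h₁ h₂
  linarith [hc.homogeneousExtension_one_zero.2, hc.homogeneousExtension_singleton_eq_zero 1]

lemma homogeneousExtension_zeros_append (hc : IsTwoCocycle Ĥ) {Z L : List ℝ}
    (hZ : ∀ x ∈ Z, x = 0) (hL : ∀ x ∈ L, 0 ≤ x) : Ĥ (Z ++ L) = Ĥ L := by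
  induction Z with
  | nil => rfl
  | cons z Z ih =>
    obtain ⟨rfl, hZ'⟩ := List.forall_mem_cons.mp hZ
    rw [List.cons_append, hc.homogeneousExtension_zero_cons, ih hZ']
    exact List.forall_mem_append.mpr ⟨fun x hx => (hZ' x hx).ge, hL⟩

lemma homogeneousExtension_append_zeros (hc : IsTwoCocycle Ĥ) {Z L : List ℝ}
    (hZ : ∀ x ∈ Z, x = 0) (hL : ∀ x ∈ L, 0 ≤ x) : Ĥ (L ++ Z) = Ĥ L := by
  induction Z generalizing L with
  | nil => rw [List.append_nil]
  | cons z Z ih =>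
    obtain ⟨rfl, hZ'⟩ := List.forall_mem_cons.mp hZ
    rw [← List.singleton_append, ← List.append_assoc,
      ih hZ' (List.forall_mem_append.mpr ⟨hL, by simp⟩),
      hc.homogeneousExtension_append_zero hL]

lemma homogeneousExtension_append (hc : IsTwoCocycle Ĥ) {A B : List ℝ} (hA : ∀ x ∈ A, 0 ≤ x)
    (hB : ∀ x ∈ B, 0 ≤ x) : Ĥ (A ++ B) = Ĥ [A.sum, B.sum] + Ĥ A + Ĥ B := by
  rcases (List.sum_nonneg hA).eq_or_lt with hA₀ | hA₀
  · have hZ (x) (hx : x ∈ A) : x = 0 := List.all_zero_of_le_zero_le_of_sum_eq_zero hA hA₀.symm hx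
    rw [hc.homogeneousExtension_zeros_append hZ hB, ← hA₀,
      hc.homogeneousExtension_zero_cons (by simpa using List.sum_nonneg hB),
      hc.homogeneousExtension_singleton_eq_zero, homogeneousExtension_of_sum_eq_zero H hA₀.symm]
    ring
  rcases (List.sum_nonneg hB).eq_or_lt with hB₀ | hB₀
  · have hZ (x) (hx : x ∈ B) : x = 0 := List.all_zero_of_le_zero_le_of_sum_eq_zero hB hB₀.symm hx
    rw [hc.homogeneousExtension_append_zeros hZ hA, ← hB₀, ← List.singleton_append,
      hc.homogeneousExtension_append_zero (by simpa using hA₀.le),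
      hc.homogeneousExtension_singleton_eq_zero, homogeneousExtension_of_sum_eq_zero H hB₀.symm]
    ring
  exact hc.apply_append hA hB hA₀ hB₀

lemma homogeneousExtension_flatten (hc : IsTwoCocycle Ĥ) {P : List (List ℝ)}
    (hP : ∀ B ∈ P, ∀ x ∈ B, 0 ≤ x) : Ĥ P.flatten = Ĥ (P.map List.sum) + (P.map Ĥ).sum := by
  induction P with
  | nil => simp [homogeneousExtension]
  | cons C P ih =>
    obtain ⟨hC, hP'⟩ := List.forall_mem_cons.mp hP
    have hF (x) (hx : x ∈ P.flatten) : 0 ≤ x := by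
      obtain ⟨B, hB, hxB⟩ := List.mem_flatten.mp hx
      exact hP' B hB x hxB
    have hS : ∀ x ∈ P.map List.sum, 0 ≤ x := by simpa using fun B hB => List.sum_nonneg (hP' B hB)
    have hsplit : Ĥ (C.sum :: P.map List.sum) =
        Ĥ [C.sum, P.flatten.sum] + Ĥ (P.map List.sum) := by
      simpa [List.sum_flatten, hc.homogeneousExtension_singleton_eq_zero] using
        hc.homogeneousExtension_append (A := [C.sum]) (by simpa using List.sum_nonneg hC) hS
    rw [List.flatten_cons, hc.homogeneousExtension_append hC hF, ih hP', List.map_cons, hsplit,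
      List.map_cons, List.sum_cons]
    ring

end IsTwoCocycle

lemma List.map_sum_zipWith_map_mul_right {p : List ℝ} {B : List (List ℝ)}
    (hlen : p.length = B.length) (hB : ∀ b ∈ B, b.sum = 1) :
    (List.zipWith (fun pi b => b.map (· * pi)) p B).map List.sum = p := by
  induction p generalizing B with
  | nil => simp
  | cons a p ih =>
    cases B with
    | nil => simp at hlen
    | cons b B => simp_all [List.sum_map_mul_right]

lemma List.nonneg_of_mem_zipWith_map_mul_right {p : List ℝ} {B : List (List ℝ)}
    (hp : ∀ x ∈ p, 0 ≤ x) (hB : ∀ b ∈ B, ∀ x ∈ b, 0 ≤ x) :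
    ∀ C ∈ List.zipWith (fun pi b => b.map (· * pi)) p B, ∀ x ∈ C, 0 ≤ x := by
  intro C hC x hx
  obtain ⟨i, hi, rfl⟩ := List.getElem_of_mem hC
  rw [List.getElem_zipWith] at hx
  obtain ⟨y, hy, rfl⟩ := List.mem_map.mp hx
  exact mul_nonneg (hB _ (List.getElem_mem _) y hy) (hp _ (List.getElem_mem _))

section grouping

variable {H : List ℝ → ℝ}

local notation "Ĥ" => homogeneousExtension H

theorem SatisfiesGrouping.isTwoCocycle (hg : SatisfiesGrouping H) : IsTwoCocycle Ĥ := by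
  intro P hP
  obtain rfl | hne := eq_or_ne P []
  · simp [homogeneousExtension]
  set S := P.flatten.sum
  have hsum : (P.map List.sum).sum = S := List.sum_flatten.symm
  have hS : 0 < S :=
    hsum ▸ List.sum_pos _ (by simpa using fun B hB => (hP B hB).2) (by simpa using hne)
  have hgroup := hg ((P.map List.sum).map (· / S)) (P.map fun b => b.map (· / b.sum)) (by simp)
    (by simpa using fun B hB => div_nonneg (List.sum_nonneg (hP B hB).1) hS.le)
    (by rw [List.sum_map_div_right, hsum, div_self hS.ne'])
    (by
      simp only [List.mem_map, forall_exists_index, and_imp, forall_apply_eq_imp_iff₂]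
      intro B hB
      obtain ⟨hB₀, hB₁⟩ := hP B hB
      exact ⟨fun x hx => div_nonneg (hB₀ x hx) hB₁.le,
        by rw [List.sum_map_div_right, div_self hB₁.ne']⟩)
  have hblocks : List.zipWith (fun pi b => b.map (· * pi)) ((P.map List.sum).map (· / S))
      (P.map fun b => b.map (· / b.sum)) = P.map (List.map (· / S)) := by
    simp only [List.map_map, List.zipWith_map, List.zipWith_self]
    refine List.map_congr_left fun b hb => List.map_congr_left fun x _ => ?_
    simp only [Function.comp_apply]
    field_simp [(hP b hb).2.ne']
  have hweights : List.zipWith (fun pi b => pi * H b) ((P.map List.sum).map (· / S))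
      (P.map fun b => b.map (· / b.sum)) = (P.map Ĥ).map (· / S) := by
    simp only [List.map_map, List.zipWith_map, List.zipWith_self]
    refine List.map_congr_left fun b _ => ?_
    simp only [Function.comp_apply, homogeneousExtension]
    ring
  rw [hblocks, ← List.map_flatten, hweights, List.sum_map_div_right] at hgroup
  calc Ĥ P.flatten = S * H (P.flatten.map (· / S)) := rfl
    _ = S * H ((P.map List.sum).map (· / S)) + (P.map Ĥ).sum := by
      rw [hgroup, mul_add, mul_div_cancel₀ _ hS.ne']
    _ = Ĥ (P.map List.sum) + (P.map Ĥ).sum := by simp only [homogeneousExtension, hsum]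

theorem IsTwoCocycle.satisfiesGrouping (hc : IsTwoCocycle Ĥ) : SatisfiesGrouping H := by
  intro p B hlen hp hp₁ hB
  set Q := List.zipWith (fun pi b => b.map (· * pi)) p B
  have hQsum : Q.map List.sum = p :=
    List.map_sum_zipWith_map_mul_right hlen fun b hb => (hB b hb).2
  have hQ₁ : Q.flatten.sum = 1 := by rw [List.sum_flatten, hQsum, hp₁]
  have hQH : Q.map Ĥ = List.zipWith (fun pi b => pi * H b) p B := by
    have hBH : B.map Ĥ = B.map H :=
      List.map_congr_left fun b hb => homogeneousExtension_of_sum_eq_one H (hB b hb).2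
    simp only [Q, List.map_zipWith, homogeneousExtension_map_mul_right]
    rw [← List.zipWith_map_right (f := Ĥ) (g := (· * ·)), hBH, List.zipWith_map_right]
  have hQ₀ : ∀ C ∈ Q, ∀ x ∈ C, 0 ≤ x :=
    List.nonneg_of_mem_zipWith_map_mul_right hp fun b hb => (hB b hb).1
  have := hc.homogeneousExtension_flatten hQ₀
  rwa [homogeneousExtension_of_sum_eq_one H hQ₁, hQsum, homogeneousExtension_of_sum_eq_one H hp₁,
    hQH] at this

end grouping

/-- `H` (on probability vectors) satisfies the grouping axiom if and only if
its homogeneous extension `Ĥ` satisfies the 2-cocycle equation on finite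
sequences of nonnegative reals, each having positive sum. -/
theorem grouping_iff_cocycle (H : List ℝ → ℝ) :
    (∀ (p : List ℝ) (B : List (List ℝ)), p.length = B.length →
        (∀ x ∈ p, 0 ≤ x) → p.sum = 1 →
        (∀ b ∈ B, (∀ x ∈ b, 0 ≤ x) ∧ b.sum = 1) →
        H ((List.zipWith (fun pi b => b.map (fun x => x * pi)) p B).flatten) =
          H p + (List.zipWith (fun pi b => pi * H b) p B).sum) ↔
    (∀ P : List (List ℝ), (∀ B ∈ P, (∀ x ∈ B, 0 ≤ x) ∧ 0 < B.sum) →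
        homogeneousExtension H P.flatten =
          homogeneousExtension H (P.map List.sum) +
            (P.map (homogeneousExtension H)).sum) :=
  ⟨SatisfiesGrouping.isTwoCocycle, IsTwoCocycle.satisfiesGrouping⟩
end

section
/- Let Ĥ be a symmetric real-valued function on finite sequences of nonnegative reals (with at least one entry, and with positive sum). Then Ĥ satisfies the 2-cocycle equation — Ĥ(a₁,…,a_k, b₁,…,b_l, …, c₁,…,c_m) = Ĥ(a₁+…+a_k, b₁+…+b_l, …, c₁+…+c_m) + Ĥ(a₁,…,a_k) + Ĥ(b₁,…,b_l) + … + Ĥ(c₁,…,c_m) for all such sequences — if and only if there exists a function g : [0,∞) → ℝ such that Ĥ(a₁,…,aₙ) = g(a₁) + … + g(aₙ) − g(a₁+…+aₙ) for all sequences in the domain of Ĥ. Moreover g can be chosen with g(1) = 0. -/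
/-!
It suffices to write the restriction of `Ĥ` to pairs as a coboundary, since a symmetric 2-cocycle
is determined by its values on pairs: a positive entry splits off as
`Ĥ (a :: L) = Ĥ [a, ΣL] + Ĥ L`, and a zero entry as `Ĥ (0 :: L) = Ĥ [0, 1] + Ĥ L`, by comparing
the splittings `[[0, 1], L]` and `[[1], 0 :: L]` of two permutations of one list.

The values on pairs form a symmetric cocycle `f` of the monoid `ℝ≥0`, and every symmetric cocycle
`f` of a commutative monoid `A` with values in a divisible group `Q` is a coboundary. Indeed, `f`
twists `A × Q` into a commutative monoid `(x, u) + (y, v) = (x + y, u + v + f x y)`; its fibre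
`ι : Q → A × Q` embeds into the Grothendieck group, and as `Q` is an injective `ℤ`-module this
embedding has a retraction `r`. Applying `r` to `(x, 0) + (y, 0) = (x + y, 0) + ι (f x y)` shows
that `g x = r (x, 0)` is a potential.
-/

open scoped NNReal

namespace SymmCocycle

variable {A Q : Type*} [AddCommMonoid A] [AddCommGroup Q]

@[ext]
structure Twisted (f : A → A → Q) where
  base : A
  fiber : Q

variable {f : A → A → Q}

namespace Twisted

instance : Add (Twisted f) :=
  ⟨fun a b => ⟨a.base + b.base, a.fiber + b.fiber + f a.base b.base⟩⟩

instance : Zero (Twisted f) := ⟨⟨0, -f 0 0⟩⟩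

@[simp] lemma add_base (a b : Twisted f) : (a + b).base = a.base + b.base := rfl
@[simp] lemma add_fiber (a b : Twisted f) :
    (a + b).fiber = a.fiber + b.fiber + f a.base b.base := rfl
@[simp] lemma zero_base : (0 : Twisted f).base = 0 := rfl
@[simp] lemma zero_fiber : (0 : Twisted f).fiber = -f 0 0 := rfl

end Twisted

variable (hsymm : ∀ x y, f x y = f y x)
  (hcoc : ∀ x y z, f x (y + z) + f y z = f (x + y) z + f x y)

include hcoc in
lemma cocycle_zero_left (y : A) : f 0 y = f 0 0 := by
  simpa using hcoc 0 0 y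

include hsymm hcoc in
lemma cocycle_zero_right (x : A) : f x 0 = f 0 0 := by
  rw [hsymm, cocycle_zero_left hcoc]

abbrev Twisted.addCommMonoid : AddCommMonoid (Twisted f) where
  add_assoc a b c := by
    ext
    · exact add_assoc _ _ _
    · calc _ = a.fiber + b.fiber + c.fiber + (f (a.base + b.base) c.base + f a.base b.base) := by
            simp only [add_fiber, add_base]; abel
        _ = _ := by simp only [add_fiber, add_base, ← hcoc]; abel
  zero_add a := by ext <;> simp [cocycle_zero_left hcoc]
  add_zero a := by ext <;> simp [cocycle_zero_right hsymm hcoc]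
  add_comm a b := by
    ext
    · exact add_comm _ _
    · simp only [Twisted.add_fiber, hsymm a.base]; abel
  nsmul := nsmulRec

open Algebra in
include hsymm hcoc in
theorem exists_eq_coboundary [DivisibleBy Q ℤ] :
    ∃ g : A → Q, ∀ x y, f x y = g x + g y - g (x + y) := by
  let _ := Twisted.addCommMonoid hsymm hcoc
  let ι : Q →+ Twisted f :=
    { toFun u := ⟨0, u - f 0 0⟩
      map_zero' := by ext <;> simp
      map_add' u v := by ext <;> simp; abel }
  have hι : Function.Injective (GrothendieckAddGroup.of.comp ι) := by
    intro u v huv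
    obtain ⟨c, hc⟩ := (AddLocalization.addMonoidOf ⊤).exists_of_eq huv
    simpa [ι] using congrArg Twisted.fiber hc
  obtain ⟨r, hr⟩ := (Module.Baer.of_divisible Q).extension_property_addMonoidHom _ hι
    (AddMonoidHom.id Q)
  set h := r.comp GrothendieckAddGroup.of
  have hsplit (x y : A) : (⟨x, 0⟩ + ⟨y, 0⟩ : Twisted f) = ⟨x + y, 0⟩ + ι (f x y) := by
    ext
    · simp [ι]
    · simp [ι, cocycle_zero_right hsymm hcoc]
  refine ⟨fun x => h ⟨x, 0⟩, fun x y => ?_⟩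
  have hfib : h (ι (f x y)) = f x y := DFunLike.congr_fun hr (f x y)
  rw [← hfib, eq_sub_iff_add_eq', ← map_add, ← map_add, hsplit]

end SymmCocycle

namespace BlockCocycle

def IsBlock (L : List ℝ) : Prop := (∀ x ∈ L, 0 ≤ x) ∧ 0 < L.sum

def IsTwoCocycle (H : List ℝ → ℝ) : Prop :=
  ∀ P : List (List ℝ), (∀ B ∈ P, IsBlock B) →
    H P.flatten = H (P.map List.sum) + (P.map H).sum

def IsSymmetric (H : List ℝ → ℝ) : Prop :=
  ∀ L M : List ℝ, L.Perm M → IsBlock L → H L = H M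

def coboundary (g : ℝ → ℝ) (L : List ℝ) : ℝ := (L.map g).sum - g L.sum

lemma isBlock_cons {a : ℝ} {L : List ℝ} (ha : 0 < a) (hL : ∀ x ∈ L, 0 ≤ x) :
    IsBlock (a :: L) :=
  ⟨by simpa [ha.le] using hL, by simpa using add_pos_of_pos_of_nonneg ha (List.sum_nonneg hL)⟩

lemma isBlock_singleton {a : ℝ} (ha : 0 < a) : IsBlock [a] :=
  isBlock_cons ha (by simp)

lemma IsBlock.ne_nil {L : List ℝ} (hL : IsBlock L) : L ≠ [] := by
  rintro rfl; simpa using hL.2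

lemma IsBlock.exists_pos {L : List ℝ} (hL : IsBlock L) : ∃ c ∈ L, 0 < c := by
  simpa using List.exists_lt_of_sum_lt (l := L) (fun _ => (0 : ℝ)) id (by simpa using hL.2)

lemma isBlock_map_sum {P : List (List ℝ)} (hP : ∀ B ∈ P, IsBlock B) (hne : P ≠ []) :
    IsBlock (P.map List.sum) := by
  have hpos : ∀ s ∈ P.map List.sum, 0 < s := by
    simpa using fun B hB => (hP B hB).2
  exact ⟨fun s hs => (hpos s hs).le, List.sum_pos _ hpos (by simpa using hne)⟩

lemma isBlock_flatten {P : List (List ℝ)} (hP : ∀ B ∈ P, IsBlock B) (hne : P ≠ []) :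
    IsBlock P.flatten := by
  refine ⟨fun x hx => ?_, by rw [List.sum_flatten]; exact (isBlock_map_sum hP hne).2⟩
  obtain ⟨B, hB, hxB⟩ := List.mem_flatten.mp hx
  exact (hP B hB).1 x hxB

lemma coboundary_flatten (g : ℝ → ℝ) (P : List (List ℝ)) :
    coboundary g P.flatten = coboundary g (P.map List.sum) + (P.map (coboundary g)).sum := by
  induction P with
  | nil => simp [coboundary]
  | cons B P ih =>
    simp only [coboundary, List.flatten_cons, List.map_append, List.map_cons, List.sum_append,
      List.sum_cons, List.sum_flatten] at *
    linarith

lemma isTwoCocycle_coboundary (g : ℝ → ℝ) : IsTwoCocycle (coboundary g) :=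
  fun P _ => coboundary_flatten g P

lemma isSymmetric_coboundary (g : ℝ → ℝ) : IsSymmetric (coboundary g) :=
  fun _ _ h _ => by simp only [coboundary, h.sum_eq, (h.map g).sum_eq]

lemma IsTwoCocycle.congr {H₁ H₂ : List ℝ → ℝ} (hH₁ : IsTwoCocycle H₁)
    (heq : ∀ L, IsBlock L → H₁ L = H₂ L) : IsTwoCocycle H₂ := by
  intro P hP
  rcases eq_or_ne P [] with rfl | hne
  · simp
  rw [← heq _ (isBlock_flatten hP hne), ← heq _ (isBlock_map_sum hP hne),
    ← List.map_congr_left fun B hB => heq B (hP B hB)]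
  exact hH₁ P hP

section

variable {H : List ℝ → ℝ} (hH : IsTwoCocycle H)
include hH

lemma IsTwoCocycle.singleton {a : ℝ} (ha : 0 < a) : H [a] = 0 := by
  simpa using hH [[a]] (by simpa using isBlock_singleton ha)

lemma IsTwoCocycle.append {B C : List ℝ} (hB : IsBlock B) (hC : IsBlock C) :
    H (B ++ C) = H [B.sum, C.sum] + H B + H C := by
  simpa [add_assoc] using hH [B, C] (by simp [hB, hC])

lemma IsTwoCocycle.cons {a : ℝ} {L : List ℝ} (ha : 0 < a) (hL : IsBlock L) :
    H (a :: L) = H [a, L.sum] + H L := by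
  simpa [hH.singleton ha] using hH.append (isBlock_singleton ha) hL

lemma IsTwoCocycle.pair_cocycle {x y z : ℝ} (hx : 0 < x) (hy : 0 ≤ y) (hz : 0 < z) :
    H [x, y + z] + H [y, z] = H [x + y, z] + H [x, y] := by
  have h₁ := hH.append (isBlock_singleton hx) (C := [y, z])
    (by simp [IsBlock, hy, hz.le]; positivity)
  have h₂ := hH.append (B := [x, y]) (isBlock_cons hx (by simp [hy])) (isBlock_singleton hz)
  simp [hH.singleton hx, hH.singleton hz] at h₁ h₂
  linarith

variable (hS : IsSymmetric H)
include hS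

lemma IsTwoCocycle.pair_zero_left {y : ℝ} (hy : 0 < y) : H [0, y] = H [0, 1] := by
  have h := hH.pair_cocycle one_pos le_rfl hy
  have hswap := hS [1, 0] [0, 1] (.swap _ _ _) (isBlock_cons one_pos (by simp))
  simp at h
  linarith

lemma IsTwoCocycle.zero_cons {L : List ℝ} (hL : IsBlock L) : H (0 :: L) = H [0, 1] + H L := by
  have h₁ := hH.append (B := [0, 1]) (by simp [IsBlock]) hL
  have h₂ := hH.append (B := [1]) (C := 0 :: L) (isBlock_singleton one_pos)
    ⟨by simpa using hL.1, by simpa using hL.2⟩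
  have hswap := hS (0 :: 1 :: L) (1 :: 0 :: L) (.swap _ _ _)
    (by simpa [IsBlock] using isBlock_cons one_pos hL.1)
  simp [hH.singleton one_pos] at h₁ h₂
  linarith

end

section

variable {H₁ H₂ : List ℝ → ℝ} (hH₁ : IsTwoCocycle H₁) (hS₁ : IsSymmetric H₁)
  (hH₂ : IsTwoCocycle H₂) (hS₂ : IsSymmetric H₂)
  (hpair : ∀ x y, 0 ≤ x → 0 < y → H₁ [x, y] = H₂ [x, y])
include hH₁ hS₁ hH₂ hS₂ hpair

lemma eq_cons_of_pair_eq {L : List ℝ} (hL : ∀ x ∈ L, 0 ≤ x) {c : ℝ} (hc : 0 < c) :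
    H₁ (c :: L) = H₂ (c :: L) := by
  induction L generalizing c with
  | nil => rw [hH₁.singleton hc, hH₂.singleton hc]
  | cons x L ih =>
    have hL' : ∀ y ∈ L, 0 ≤ y := fun y hy => hL y (List.mem_cons_of_mem _ hy)
    rcases (hL x List.mem_cons_self).eq_or_lt with rfl | hx
    · have hcL := isBlock_cons hc hL'
      have hswap {H} (hS : IsSymmetric H) : H (c :: 0 :: L) = H (0 :: c :: L) :=
        hS _ _ (.swap _ _ _) (isBlock_cons hc hL)
      rw [hswap hS₁, hswap hS₂, hH₁.zero_cons hS₁ hcL, hH₂.zero_cons hS₂ hcL,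
        hpair 0 1 le_rfl one_pos, ih hL' hc]
    · have hxL := isBlock_cons hx hL'
      rw [hH₁.cons hc hxL, hH₂.cons hc hxL, hpair c _ hc.le hxL.2, ih hL' hx]

theorem eq_of_pair_eq {L : List ℝ} (hL : IsBlock L) : H₁ L = H₂ L := by
  obtain ⟨c, hcL, hc⟩ := hL.exists_pos
  have hperm := List.perm_cons_erase hcL
  rw [hS₁ _ _ hperm hL, hS₂ _ _ hperm hL]
  exact eq_cons_of_pair_eq hH₁ hS₁ hH₂ hS₂ hpair
    (fun x hx => hL.1 x (List.mem_of_mem_erase hx)) hc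

end

-- `H [0, 0]` is unconstrained; a vanishing argument gets the common value of `H [0, y]`, `y > 0`.
noncomputable def onPairs (H : List ℝ → ℝ) (x y : ℝ≥0) : ℝ :=
  if 0 < x ∧ 0 < y then H [x, y] else H [0, 1]

lemma onPairs_symm {H : List ℝ → ℝ} (hS : IsSymmetric H) (x y : ℝ≥0) :
    onPairs H x y = onPairs H y x := by
  unfold onPairs
  by_cases h : 0 < x ∧ 0 < y
  · rw [if_pos h, if_pos h.symm]
    exact hS _ _ (.swap _ _ _) (isBlock_cons h.1 (by simp))
  · rw [if_neg h, if_neg (mt And.symm h)]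

lemma onPairs_cocycle {H : List ℝ → ℝ} (hH : IsTwoCocycle H) (x y z : ℝ≥0) :
    onPairs H x (y + z) + onPairs H y z = onPairs H (x + y) z + onPairs H x y := by
  rcases eq_zero_or_pos x with rfl | hx
  · simp [onPairs, add_comm]
  rcases eq_zero_or_pos z with rfl | hz
  · simp [onPairs, add_comm]
  rcases eq_zero_or_pos y with rfl | hy
  · simp [onPairs, hx, hz]
  simp only [onPairs, hx, hy, hz, add_pos, and_self, if_true, NNReal.coe_add]
  exact hH.pair_cocycle hx y.2 hz

theorem exists_pair_eq_coboundary {H : List ℝ → ℝ} (hH : IsTwoCocycle H) (hS : IsSymmetric H) :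
    ∃ g : ℝ → ℝ, g 1 = 0 ∧ ∀ x y, 0 ≤ x → 0 < y → H [x, y] = coboundary g [x, y] := by
  obtain ⟨g₀, hg₀⟩ := SymmCocycle.exists_eq_coboundary (onPairs_symm hS) (onPairs_cocycle hH)
  -- subtracting a linear function from a potential normalizes it without changing its coboundary
  refine ⟨fun t => g₀ t.toNNReal - t * g₀ 1, by simp, fun x y hx hy => ?_⟩
  have hpair : H [x, y] = onPairs H x.toNNReal y.toNNReal := by
    rcases hx.eq_or_lt with rfl | hx
    · simp [onPairs, hH.pair_zero_left hS hy]
    · simp [onPairs, hx, hy, hx.le, hy.le]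
  simp only [coboundary, List.map_cons, List.map_nil, List.sum_cons, List.sum_nil, add_zero]
  rw [hpair, hg₀, Real.toNNReal_add hx hy.le]
  ring

end BlockCocycle

/-- A symmetric real-valued function `Ĥ` on finite sequences (lists) of
nonnegative reals with positive sum satisfies the 2-cocycle equation if and
only if there is a `potential` `g : [0,∞) → ℝ` with
`Ĥ (a₁,…,aₙ) = g a₁ + … + g aₙ - g (a₁+…+aₙ)`; moreover `g` can be chosen so
that `g 1 = 0`. -/
theorem cocycle_iff_potential (Hhat : List ℝ → ℝ)
    (h_symm : ∀ L M : List ℝ, L.Perm M → (∀ x ∈ L, 0 ≤ x) → 0 < L.sum →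
      Hhat L = Hhat M) :
    (∀ P : List (List ℝ), (∀ B ∈ P, (∀ x ∈ B, 0 ≤ x) ∧ 0 < B.sum) →
        Hhat P.flatten = Hhat (P.map List.sum) + (P.map Hhat).sum) ↔
    (∃ g : ℝ → ℝ, g 1 = 0 ∧
      ∀ L : List ℝ, L ≠ [] → (∀ x ∈ L, 0 ≤ x) → 0 < L.sum →
        Hhat L = (L.map g).sum - g L.sum) := by
  have hS : BlockCocycle.IsSymmetric Hhat := fun L M h hL => h_symm L M h hL.1 hL.2
  constructor
  · intro hH
    obtain ⟨g, hg1, hpair⟩ := BlockCocycle.exists_pair_eq_coboundary hH hS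
    exact ⟨g, hg1, fun L _ hL hsum => BlockCocycle.eq_of_pair_eq hH hS
      (BlockCocycle.isTwoCocycle_coboundary g) (BlockCocycle.isSymmetric_coboundary g) hpair
      ⟨hL, hsum⟩⟩
  · rintro ⟨g, -, hg⟩
    exact (BlockCocycle.isTwoCocycle_coboundary g).congr fun L hL =>
      (hg L hL.ne_nil hL.1 hL.2).symm
end

section
/- Let l : {1,2,3,…} → ℝ satisfy l(a·b) = l(a) + l(b) for all positive integers a, b, and suppose that l(n+1) − l(n) + l(n+1)/n → 0 as n → ∞. Then there exists a real constant c such that l(n) = c·ln n for all positive integers n. (Indeed, by Mercer's theorem applied to aₙ = l(n+1) − l(n), whose partial sums are sₙ = l(n+1) − l(1) = l(n+1), the hypothesis forces l(n+1) − l(n) → 0, and the completely additive hypothesis then gives l(n) = c·ln n.) -/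
/-!
Write `b n = l (n + 1) - l n + l (n + 1) / n`. Then `n * b n` is the increment of `n * l n`,
so `n * l n = o(n²)`, i.e. `l n / n → 0`, and subtracting this from `b n` gives
`l (n + 1) - l n → 0`.

For the second half put `g = l - c log` with `c = l 2 / log 2`: it is completely additive, its
increments still tend to `0`, and `g (2 q) = g q`. Hence `g n - g (n / 2) → 0`, and iterating
`n ↦ n / 2` about `log₂ n` times gives `g n = o(log n)`. Finally `g (n ^ k) = k g n` forces
`g n / log n = g (n ^ k) / log (n ^ k) → 0`, so `g = 0`.
-/

open Filter Topology Asymptotics Finset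

theorem isLittleO_sq_of_isLittleO_sub {t : ℕ → ℝ}
    (h : (fun n ↦ t (n + 1) - t n) =o[atTop] fun n ↦ (n : ℝ)) :
    t =o[atTop] fun n ↦ (n : ℝ) ^ 2 := by
  have hsum_tendsto : Tendsto (fun n ↦ ∑ i ∈ range n, (i : ℝ)) atTop atTop := by
    rw [← tendsto_add_atTop_iff_nat 1]
    refine tendsto_atTop_mono (fun n ↦ ?_) tendsto_natCast_atTop_atTop
    rw [sum_range_succ]
    exact le_add_of_nonneg_left (sum_nonneg fun i _ ↦ i.cast_nonneg)
  have hsum_le : (fun n ↦ ∑ i ∈ range n, (i : ℝ)) =O[atTop] fun n ↦ (n : ℝ) ^ 2 := by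
    refine IsBigO.of_bound 1 (Eventually.of_forall fun n ↦ ?_)
    rw [Real.norm_of_nonneg (sum_nonneg fun i _ ↦ i.cast_nonneg),
      Real.norm_of_nonneg (by positivity), one_mul, sq]
    calc ∑ i ∈ range n, (i : ℝ) ≤ ∑ _i ∈ range n, (n : ℝ) :=
          sum_le_sum fun i hi ↦ by exact_mod_cast (mem_range.1 hi).le
      _ = n * n := by simp
  have htel : (fun n ↦ t n - t 0) =o[atTop] fun n ↦ ∑ i ∈ range n, (i : ℝ) := by
    simpa only [sum_range_sub] using h.sum_range (fun i ↦ i.cast_nonneg) hsum_tendsto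
  have hconst : (fun _ : ℕ ↦ t 0) =o[atTop] fun n ↦ (n : ℝ) ^ 2 :=
    isLittleO_const_left.2 <| Or.inr <|
      tendsto_norm_atTop_atTop.comp <|
        (tendsto_pow_atTop (α := ℝ) two_ne_zero).comp tendsto_natCast_atTop_atTop
  simpa using (htel.trans_isBigO hsum_le).add hconst

/-- The case `a n = s (n + 1) - s n` of Mercer's theorem. -/
theorem tendsto_sub_of_tendsto_sub_add_div {s : ℕ → ℝ}
    (h : Tendsto (fun n : ℕ ↦ s (n + 1) - s n + s (n + 1) / n) atTop (𝓝 0)) :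
    Tendsto (fun n : ℕ ↦ s (n + 1) - s n) atTop (𝓝 0) := by
  have hinc :
      (fun n : ℕ ↦ (n + 1 : ℝ) * s (n + 1) - n * s n) =o[atTop] fun n ↦ (n : ℝ) := by
    have := (isBigO_refl (fun n : ℕ ↦ (n : ℝ)) atTop).mul_isLittleO
      ((isLittleO_one_iff ℝ).2 h)
    simp only [mul_one] at this
    refine this.congr' ?_ EventuallyEq.rfl
    filter_upwards [eventually_ne_atTop 0] with n hn
    field_simp
    ring
  have hdiv : Tendsto (fun n : ℕ ↦ s n / n) atTop (𝓝 0) := by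
    have ht := isLittleO_sq_of_isLittleO_sub (t := fun n ↦ n * s n) (by simpa using hinc)
    refine ht.tendsto_div_nhds_zero.congr' ?_
    filter_upwards [eventually_ne_atTop 0] with n hn
    field_simp
  have hshift : Tendsto (fun n : ℕ ↦ s (n + 1) / n) atTop (𝓝 0) := by
    have := ((tendsto_add_atTop_iff_nat 1).2 hdiv).div (tendsto_natCast_div_add_atTop (1 : ℝ))
      one_ne_zero
    rw [zero_div] at this
    refine this.congr' ?_
    filter_upwards [eventually_ne_atTop 0] with n hn
    simp only [Pi.div_apply]
    push_cast
    field_simp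
  simpa using h.sub hshift

theorem exists_abs_le_add_mul_logb_s9 {g : ℕ → ℝ} {m K : ℕ} {ε : ℝ} (hm : 1 < m)
    (hε : 0 ≤ ε) (h : ∀ n ≥ K, |g n - g (n / m)| ≤ ε) :
    ∃ D, ∀ n, 0 < n → |g n| ≤ D + ε * Real.logb m n := by
  have hm' : (1 : ℝ) < m := by exact_mod_cast hm
  refine ⟨∑ n ∈ range (K + m), |g n|, fun n ↦ ?_⟩
  induction n using Nat.strong_induction_on with
  | _ n ih =>
    intro hn
    have hlogb : 0 ≤ Real.logb m n := Real.logb_nonneg hm' (by exact_mod_cast hn)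
    by_cases hsmall : n < K + m
    · have := single_le_sum (fun i _ ↦ abs_nonneg (g i)) (mem_range.2 hsmall)
      nlinarith [mul_nonneg hε hlogb]
    set q := n / m
    have hq : 0 < q := Nat.div_pos (by omega) (by omega)
    have hqn : q * m ≤ n := Nat.div_mul_le_self n m
    have hlogb_q : Real.logb m q + 1 ≤ Real.logb m n := by
      rw [← Real.logb_self_eq_one hm', ← Real.logb_mul (by positivity) (by positivity)]
      exact Real.logb_le_logb_of_le hm' (by positivity) (by exact_mod_cast hqn)
    have hstep := h n (by omega)
    have hrec := ih q (Nat.div_lt_self hn hm) hq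
    nlinarith [abs_sub_abs_le_abs_sub (g n) (g q), mul_le_mul_of_nonneg_left hlogb_q hε]

theorem isLittleO_log_of_tendsto_sub_div {g : ℕ → ℝ} {m : ℕ} (hm : 1 < m)
    (h : Tendsto (fun n ↦ g n - g (n / m)) atTop (𝓝 0)) :
    g =o[atTop] fun n ↦ Real.log n := by
  have hlog_m : 0 < Real.log m := Real.log_pos (by exact_mod_cast hm)
  refine isLittleO_iff.2 fun c hc ↦ ?_
  obtain ⟨K, hK⟩ := eventually_atTop.1 <|
    (Metric.tendsto_nhds.1 h) (c * Real.log m / 2) (by positivity)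
  obtain ⟨D, hD⟩ := exists_abs_le_add_mul_logb_s9 (g := g) (ε := c * Real.log m / 2) hm
    (by positivity) fun n hn ↦ by simpa using (hK n hn).le
  have hlog_large : ∀ᶠ n : ℕ in atTop, 2 * D / c ≤ Real.log n :=
    (Real.tendsto_log_atTop.comp tendsto_natCast_atTop_atTop).eventually_ge_atTop _
  filter_upwards [hlog_large, eventually_gt_atTop 0] with n hlarge hpos
  have hbound := hD n hpos
  have hlogb : c * Real.log m / 2 * Real.logb m n = c / 2 * Real.log n := by
    rw [Real.logb]
    field_simp
  rw [div_le_iff₀ hc] at hlarge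
  rw [Real.norm_eq_abs, Real.norm_of_nonneg (Real.log_natCast_nonneg n)]
  linarith

theorem tendsto_sub_add_of_tendsto_sub {f : ℕ → ℝ}
    (h : Tendsto (fun n ↦ f (n + 1) - f n) atTop (𝓝 0)) (j : ℕ) :
    Tendsto (fun n ↦ f (n + j) - f n) atTop (𝓝 0) := by
  induction j with
  | zero => simp
  | succ j ih =>
    simpa [← add_assoc] using ((tendsto_add_atTop_iff_nat j).2 h).add ih

theorem tendsto_sub_mul_div_of_tendsto_sub {f : ℕ → ℝ} {m : ℕ} (hm : 0 < m)
    (h : Tendsto (fun n ↦ f (n + 1) - f n) atTop (𝓝 0)) :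
    Tendsto (fun n ↦ f n - f (m * (n / m))) atTop (𝓝 0) := by
  set F : ℕ → Fin m → ℝ := fun q r ↦ f (m * q + r) - f (m * q)
  have hF : Tendsto F atTop (𝓝 0) := tendsto_pi_nhds.2 fun r ↦
    (tendsto_sub_add_of_tendsto_sub h r).comp <|
      tendsto_atTop_mono (fun q ↦ Nat.le_mul_of_pos_left q hm) tendsto_id
  refine squeeze_zero_norm (fun n ↦ ?_) <| by
    simpa using (hF.comp (Nat.tendsto_div_const_atTop hm.ne')).norm
  simpa only [F, Nat.div_add_mod] using norm_le_pi_norm (F (n / m)) ⟨n % m, Nat.mod_lt n hm⟩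

def IsCompletelyAdditive (l : ℕ → ℝ) : Prop :=
  ∀ a b : ℕ, 0 < a → 0 < b → l (a * b) = l a + l b

namespace IsCompletelyAdditive

variable {l : ℕ → ℝ}

theorem map_one (hl : IsCompletelyAdditive l) : l 1 = 0 := by
  simpa using hl 1 1 one_pos one_pos

theorem map_pow (hl : IsCompletelyAdditive l) {n : ℕ} (hn : 0 < n) (k : ℕ) :
    l (n ^ k) = k * l n := by
  induction k with
  | zero => simp [hl.map_one]
  | succ k ih =>
    rw [pow_succ, hl _ _ (pow_pos hn k) hn, ih]
    push_cast
    ring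

theorem sub_mul_log (hl : IsCompletelyAdditive l) (c : ℝ) :
    IsCompletelyAdditive fun n ↦ l n - c * Real.log n := by
  intro a b ha hb
  beta_reduce
  rw [hl a b ha hb, Nat.cast_mul, Real.log_mul (by positivity) (by positivity)]
  ring

theorem tendsto_sub_div (hl : IsCompletelyAdditive l) {m : ℕ} (hm : 0 < m) (hlm : l m = 0)
    (h : Tendsto (fun n ↦ l (n + 1) - l n) atTop (𝓝 0)) :
    Tendsto (fun n ↦ l n - l (n / m)) atTop (𝓝 0) := by
  refine (tendsto_sub_mul_div_of_tendsto_sub hm h).congr' ?_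
  filter_upwards [eventually_ge_atTop m] with n hn
  rw [hl m _ hm (Nat.div_pos hn hm), hlm, zero_add]

theorem eq_zero_of_isLittleO_log (hl : IsCompletelyAdditive l)
    (h : l =o[atTop] fun n ↦ Real.log n) {n : ℕ} (hn : 0 < n) : l n = 0 := by
  obtain rfl | hn : n = 1 ∨ 1 < n := by omega
  · exact hl.map_one
  have hlog : Real.log n ≠ 0 := (Real.log_pos (by exact_mod_cast hn)).ne'
  have hpow := h.tendsto_div_nhds_zero.comp (tendsto_pow_atTop_atTop_of_one_lt hn)
  have hconst : Tendsto (fun k : ℕ ↦ l (n ^ k) / Real.log (n ^ k : ℕ)) atTop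
      (𝓝 (l n / Real.log n)) := by
    refine tendsto_const_nhds.congr' ?_
    filter_upwards [eventually_ne_atTop 0] with k hk
    rw [hl.map_pow (by omega), Nat.cast_pow, Real.log_pow]
    field_simp
  simpa [hlog] using tendsto_nhds_unique hconst hpow

theorem exists_eq_mul_log (hl : IsCompletelyAdditive l)
    (h : Tendsto (fun n ↦ l (n + 1) - l n) atTop (𝓝 0)) :
    ∃ c : ℝ, ∀ n : ℕ, 0 < n → l n = c * Real.log n := by
  set c := l 2 / Real.log 2
  have hg := hl.sub_mul_log c
  have hg2 : l 2 - c * Real.log (2 : ℕ) = 0 := by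
    rw [Nat.cast_ofNat, sub_eq_zero, div_mul_cancel₀ _ (Real.log_pos one_lt_two).ne']
  have hg_inc : Tendsto
      (fun n ↦ (l (n + 1) - c * Real.log (n + 1 : ℕ)) - (l n - c * Real.log n)) atTop
      (𝓝 0) := by
    simpa [sub_sub_sub_comm, ← mul_sub] using
      h.sub (Real.tendsto_log_nat_add_one_sub_log.const_mul c)
  have hg_log :=
    isLittleO_log_of_tendsto_sub_div one_lt_two (hg.tendsto_sub_div two_pos hg2 hg_inc)
  exact ⟨c, fun n hn ↦ sub_eq_zero.1 (hg.eq_zero_of_isLittleO_log hg_log hn)⟩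

end IsCompletelyAdditive

/-- If `l : {1,2,…} → ℝ` is completely additive (`l (a·b) = l a + l b` for
all positive integers) and `l (n+1) - l n + l (n+1)/n → 0` as `n → ∞`, then
`l n = c · ln n` for some real constant `c`. -/
theorem completely_additive_log_of_mercer_condition
    (l : ℕ → ℝ)
    (h_add : ∀ a b : ℕ, 0 < a → 0 < b → l (a * b) = l a + l b)
    (h_lim : Tendsto (fun n : ℕ => l (n + 1) - l n + l (n + 1) / n) atTop
      (nhds 0)) :
    ∃ c : ℝ, ∀ n : ℕ, 0 < n → l n = c * Real.log n :=
  IsCompletelyAdditive.exists_eq_mul_log h_add (tendsto_sub_of_tendsto_sub_add_div h_lim)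
end
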